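/- Let G₁, G₂, and H be finite simple graphs with H having at least one vertex. Then D(G₁ + H, x) = D(G₂ + H, x) if and only if D(G₁, x) = D(G₂, x). -/

import Mathlib

open Polynomial

variable {V W : Type*}

/-- `S` is a dominating set of `G`. -/
def Dominates (G : SimpleGraph V) (S : Finset V) : Prop :=
  ∀ v, v ∉ S → ∃ u ∈ S, G.Adj u v

open Classical in
/-- The domination polynomial of a finite simple graph. -/
noncomputable def domPoly [Fintype V] (G : SimpleGraph V) : Polynomial ℤ :=
  ∑ S : Finset V, if Dominates G S then (X : Polynomial ℤ) ^ S.card else 0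

/-- The join of two graphs on disjoint vertex sets. -/
def graphJoin (G : SimpleGraph V) (H : SimpleGraph W) : SimpleGraph (V ⊕ W) where
  Adj x y :=
    match x, y with
    | Sum.inl a, Sum.inl b => G.Adj a b
    | Sum.inr a, Sum.inr b => H.Adj a b
    | _, _ => True
  symm := by
    refine ⟨?_⟩
    rintro (a | a) (b | b) h
    · exact G.adj_symm h
    · trivial
    · trivial
    · exact H.adj_symm h
  loopless := by
    refine ⟨?_⟩
    rintro (a | a) h
    · exact G.irrefl h
    · exact H.irrefl h

/-!
A set `A ⊔ B` of vertices of `G + H` that meets both sides dominates, since every vertex is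
adjacent to the whole other side; a set contained in one side dominates iff it is nonempty and
dominates that side. Summing `x ^ |A ⊔ B|` accordingly gives, for `H` nonempty,
`D(G + H) = ((1 + x)^|G| - 1)((1 + x)^|H| - 1) + D(G) + D(H)`, corrected by `-1` when `G` has no
vertices (then `∅` dominates `G` but not `G + H`). Since `D(G)` has degree `|G|`, both equalities in
the theorem force `|G₁| = |G₂|`, and then the formula is solved for `D(Gᵢ)`.
-/

open Finset

section Dominates

variable {G : SimpleGraph V} {S : Finset V}

theorem dominates_univ [Fintype V] : Dominates G univ :=
  fun v hv => absurd (mem_univ v) hv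

theorem dominates_empty_iff : Dominates G ∅ ↔ IsEmpty V :=
  ⟨fun h => ⟨fun v => by simpa using h v (notMem_empty v)⟩, fun _ v => isEmptyElim v⟩

theorem Dominates.nonempty [Nonempty V] (h : Dominates G S) : S.Nonempty := by
  obtain ⟨v⟩ := ‹Nonempty V›
  by_cases hv : v ∈ S
  · exact ⟨v, hv⟩
  · obtain ⟨u, hu, -⟩ := h v hv
    exact ⟨u, hu⟩

theorem dominates_graphJoin_disjSum_iff {H : SimpleGraph W} {A : Finset V} {B : Finset W} :
    Dominates (graphJoin G H) (A.disjSum B) ↔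
      (B.Nonempty ∨ Dominates G A) ∧ (A.Nonempty ∨ Dominates H B) := by
  constructor
  · intro h
    refine ⟨or_iff_not_imp_left.2 fun hB v hv => ?_, or_iff_not_imp_left.2 fun hA w hw => ?_⟩
    · obtain ⟨a | b, hu, hadj⟩ := h (.inl v) (by simpa using hv)
      · exact ⟨a, by simpa using hu, hadj⟩
      · exact absurd ⟨b, by simpa using hu⟩ hB
    · obtain ⟨a | b, hu, hadj⟩ := h (.inr w) (by simpa using hw)
      · exact absurd ⟨a, by simpa using hu⟩ hA
      · exact ⟨b, by simpa using hu, hadj⟩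
  · rintro ⟨hG, hH⟩ (v | w) hx
    · rcases hG with ⟨b, hb⟩ | hG
      · exact ⟨.inr b, by simpa using hb, trivial⟩
      · obtain ⟨a, ha, hadj⟩ := hG v (by simpa using hx)
        exact ⟨.inl a, by simpa using ha, hadj⟩
    · rcases hH with ⟨a, ha⟩ | hH
      · exact ⟨.inl a, by simpa using ha, trivial⟩
      · obtain ⟨b, hb, hadj⟩ := hH w (by simpa using hx)
        exact ⟨.inr b, by simpa using hb, hadj⟩

end Dominates

theorem Fintype.sum_ite_nonempty_pow_card {R : Type*} [CommRing R] [Fintype V] (x : R) :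
    ∑ S : Finset V, (if S.Nonempty then x ^ #S else 0) = (x + 1) ^ Fintype.card V - 1 := by
  classical
  have hsplit (S : Finset V) :
      (if S.Nonempty then x ^ #S else 0) = x ^ #S - if S = ∅ then 1 else 0 := by
    rcases S.eq_empty_or_nonempty with rfl | hS
    · simp
    · simp [hS, hS.ne_empty]
  simp only [hsplit, sum_sub_distrib, sum_ite_eq']
  simpa using Fintype.sum_pow_mul_eq_add_pow V x 1

theorem Fintype.sum_finset_sum_eq_disjSum {α β M : Type*} [Fintype α] [Fintype β]
    [AddCommMonoid M] (f : Finset (α ⊕ β) → M) : ∑ S, f S = ∑ A : Finset α, ∑ B : Finset β, f (A.disjSum B) := by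
  rw [← Fintype.sum_prod_type']
  exact (Fintype.sum_equiv sumEquiv.symm.toEquiv _ _ fun _ => rfl).symm

theorem natDegree_domPoly [Fintype V] (G : SimpleGraph V) :
    (domPoly G).natDegree = Fintype.card V := by
  classical
  rw [domPoly, ← add_sum_erase _ _ (mem_univ univ), if_pos dominates_univ, card_univ]
  have hsmall : (∑ S ∈ univ.erase univ,
      if Dominates G S then (X : ℤ[X]) ^ #S else 0).degree < Fintype.card V := by
    refine (degree_sum_le _ _).trans_lt <| (Finset.sup_lt_iff (WithBot.bot_lt_coe _)).2 ?_
    intro S hS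
    have hcard : #S < Fintype.card V := (card_lt_iff_ne_univ S).2 (ne_of_mem_erase hS)
    split_ifs
    · simpa using hcard
    · simp
  rw [natDegree_add_eq_left_of_degree_lt (by simpa using hsmall), natDegree_X_pow]

theorem card_eq_of_domPoly_eq {V' : Type*} [Fintype V] [Fintype V'] {G : SimpleGraph V}
    {G' : SimpleGraph V'} (h : domPoly G = domPoly G') : Fintype.card V = Fintype.card V' := by
  rw [← natDegree_domPoly G, ← natDegree_domPoly G', h]

theorem domPoly_graphJoin [Fintype V] [Fintype W] [Nonempty W] (G : SimpleGraph V)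
    (H : SimpleGraph W) :
    domPoly (graphJoin G H) =
      ((X + 1) ^ Fintype.card V - 1) * ((X + 1) ^ Fintype.card W - 1) + domPoly G + domPoly H -
        if Fintype.card V = 0 then 1 else 0 := by
  classical
  have hterm (A : Finset V) (B : Finset W) :
      (if Dominates (graphJoin G H) (A.disjSum B) then (X : ℤ[X]) ^ #(A.disjSum B) else 0) =
        (if A.Nonempty then X ^ #A else 0) * (if B.Nonempty then X ^ #B else 0) +
          (if B = ∅ then if Dominates G A then X ^ #A else 0 else 0) +
          (if A = ∅ then if Dominates H B then X ^ #B else 0 else 0) -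
          if A = ∅ ∧ B = ∅ ∧ Fintype.card V = 0 then 1 else 0 := by
    rw [dominates_graphJoin_disjSum_iff, card_disjSum]
    rcases A.eq_empty_or_nonempty with rfl | hA <;> rcases B.eq_empty_or_nonempty with rfl | hB
    · have hH : ¬ Dominates H ∅ := fun h => not_nonempty_empty h.nonempty
      simp [hH, dominates_empty_iff, Fintype.card_eq_zero_iff]
    · simp [hB, hB.ne_empty]
    · simp [hA, hA.ne_empty]
    · simp [hA, hB, hA.ne_empty, hB.ne_empty, pow_add]
  rw [domPoly, Fintype.sum_finset_sum_eq_disjSum]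
  simp only [hterm, sum_add_distrib, sum_sub_distrib]
  rw [← sum_mul_sum, Fintype.sum_ite_nonempty_pow_card, Fintype.sum_ite_nonempty_pow_card]
  simp [domPoly, ite_and]

/-- Joining with a fixed nonempty graph `H` is cancellative for the
domination polynomial. -/
theorem domPoly_join_cancel {V₁ V₂ W : Type*} [Fintype V₁] [Fintype V₂] [Fintype W]
    [Nonempty W] (G₁ : SimpleGraph V₁) (G₂ : SimpleGraph V₂) (H : SimpleGraph W) :
    domPoly (graphJoin G₁ H) = domPoly (graphJoin G₂ H) ↔
      domPoly G₁ = domPoly G₂ := by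
  constructor
  · intro h
    have hcard : Fintype.card V₁ = Fintype.card V₂ := by
      simpa [Fintype.card_sum] using card_eq_of_domPoly_eq h
    rw [domPoly_graphJoin, domPoly_graphJoin, hcard] at h
    linear_combination h
  · intro h
    rw [domPoly_graphJoin, domPoly_graphJoin, card_eq_of_domPoly_eq h, h]
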